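/- Let n ≥ 1, let T be an n×n complex positive definite Hermitian matrix, and set δ = λ_min(T)/2 > 0, where λ_min(T) is the smallest eigenvalue of T. Then for every n×n complex positive definite Hermitian matrix S with ‖T − S‖_Fr ≤ δ one has |γ₊(T) − γ₊(S)| ≤ ((n/δ)·trace(T) + 2·n^{3/2})·‖T − S‖_Fr. In particular γ₊ is continuous on the set of positive definite Hermitian matrices. -/

import Mathlib

open Matrix ComplexOrder

/-- The ℓ¹ norm of a vector in ℂⁿ. -/
noncomputable def l1n {n : ℕ} (x : Fin n → ℂ) : ℝ := ∑ i, ‖x i‖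

/-- The entrywise ℓ¹ norm ‖A‖₁,₁ of a matrix. -/
noncomputable def norm11 {n : ℕ} (A : Matrix (Fin n) (Fin n) ℂ) : ℝ :=
  ∑ i, ∑ j, ‖A i j‖

/-- The Frobenius norm of a matrix. -/
noncomputable def frobNorm {n : ℕ} (A : Matrix (Fin n) (Fin n) ℂ) : ℝ :=
  Real.sqrt (∑ i, ∑ j, ‖A i j‖ ^ 2)

/-- γ₊(A): infimum of Σ ‖g_k‖₁² over finite decompositions A = Σ g_k g_k*. -/
noncomputable def gammaPlus {n : ℕ} (A : Matrix (Fin n) (Fin n) ℂ) : ℝ :=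
  sInf {r : ℝ | ∃ (m : ℕ) (g : Fin m → Fin n → ℂ),
    A = ∑ k, vecMulVec (g k) (star (g k)) ∧ r = ∑ k, (l1n (g k)) ^ 2}

/-- γ(A): infimum of Σ ‖g_k‖₁‖h_k‖₁ over finite decompositions A = Σ g_k h_k*. -/
noncomputable def gammaCross {n : ℕ} (A : Matrix (Fin n) (Fin n) ℂ) : ℝ :=
  sInf {r : ℝ | ∃ (m : ℕ) (g h : Fin m → Fin n → ℂ),
    A = ∑ k, vecMulVec (g k) (star (h k)) ∧ r = ∑ k, l1n (g k) * l1n (h k)}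

/-- γ₀(A): infimum of γ₊(B) + γ₊(C) over decompositions A = B - C with B, C PSD. -/
noncomputable def gammaZero {n : ℕ} (A : Matrix (Fin n) (Fin n) ℂ) : ℝ :=
  sInf {r : ℝ | ∃ B C : Matrix (Fin n) (Fin n) ℂ, B.PosSemidef ∧ C.PosSemidef ∧
    A = B - C ∧ r = gammaPlus B + gammaPlus C}

/-!
`gammaPlus` is subadditive and positively homogeneous on positive semidefinite matrices, and
`gammaPlus A ≤ n * tr A`, by writing `A = ∑ vₖ vₖ*` and using `‖v‖₁² ≤ n ‖v‖₂²`.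
Let `λ_min(T) ≥ 2δ`, `ε = ‖T - S‖_Fr ≤ δ` and `c = ε / δ ≤ 1`. Since `-ε ≤ T - S ≤ ε` in the
Loewner order, both `T - (1 - c) S = c T + (1 - c) (T - S)` and `S - (1 - c) T = c T + (S - T)`
are positive semidefinite, with trace at most `c tr T + √n ε`. So each of `gammaPlus T` and
`gammaPlus S` exceeds the other by at most `n (c tr T + √n ε)`.
-/

open Finset
open scoped Pointwise Topology
open Filter

section Costs

variable {n : ℕ}

lemma l1n_smul (r : ℝ) (x : Fin n → ℂ) : l1n (r • x) = |r| * l1n x := by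
  simp [l1n, mul_sum]

lemma l1n_sq_le (x : Fin n → ℂ) : l1n x ^ 2 ≤ n * ∑ i, ‖x i‖ ^ 2 := by
  simpa [l1n] using sq_sum_le_card_mul_sum_sq (s := univ) (f := fun i => ‖x i‖)

lemma star_dotProduct_self (x : Fin n → ℂ) : star x ⬝ᵥ x = ((∑ i, ‖x i‖ ^ 2 : ℝ) : ℂ) := by
  simp [dotProduct, Complex.conj_mul']

def gammaPlusCosts (A : Matrix (Fin n) (Fin n) ℂ) : Set ℝ :=
  {r : ℝ | ∃ (m : ℕ) (g : Fin m → Fin n → ℂ),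
    A = ∑ k, vecMulVec (g k) (star (g k)) ∧ r = ∑ k, (l1n (g k)) ^ 2}

lemma gammaPlus_eq_sInf (A : Matrix (Fin n) (Fin n) ℂ) :
    gammaPlus A = sInf (gammaPlusCosts A) := rfl

lemma nonneg_of_mem_gammaPlusCosts {A : Matrix (Fin n) (Fin n) ℂ} {r : ℝ}
    (hr : r ∈ gammaPlusCosts A) : 0 ≤ r := by
  obtain ⟨m, g, -, rfl⟩ := hr
  positivity

lemma bddBelow_gammaPlusCosts (A : Matrix (Fin n) (Fin n) ℂ) : BddBelow (gammaPlusCosts A) :=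
  ⟨0, fun _ => nonneg_of_mem_gammaPlusCosts⟩

lemma gammaPlus_nonneg (A : Matrix (Fin n) (Fin n) ℂ) : 0 ≤ gammaPlus A :=
  Real.sInf_nonneg fun _ => nonneg_of_mem_gammaPlusCosts

lemma gammaPlus_le_of_eq_sum {A : Matrix (Fin n) (Fin n) ℂ} {m : ℕ} {g : Fin m → Fin n → ℂ}
    (hA : A = ∑ k, vecMulVec (g k) (star (g k))) : gammaPlus A ≤ ∑ k, l1n (g k) ^ 2 :=
  csInf_le (bddBelow_gammaPlusCosts A) ⟨m, g, hA, rfl⟩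

lemma gammaPlusCosts_nonempty {A : Matrix (Fin n) (Fin n) ℂ} (hA : A.PosSemidef) :
    (gammaPlusCosts A).Nonempty := by
  obtain ⟨m, g, hg⟩ := posSemidef_iff_eq_sum_vecMulVec.mp hA
  exact ⟨_, m, g, hg, rfl⟩

lemma gammaPlus_le_mul_re_trace {A : Matrix (Fin n) (Fin n) ℂ} (hA : A.PosSemidef) :
    gammaPlus A ≤ n * A.trace.re := by
  obtain ⟨m, g, hg⟩ := posSemidef_iff_eq_sum_vecMulVec.mp hA
  calc gammaPlus A ≤ ∑ k, l1n (g k) ^ 2 := gammaPlus_le_of_eq_sum hg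
    _ ≤ ∑ k, n * ∑ i, ‖g k i‖ ^ 2 := sum_le_sum fun k _ => l1n_sq_le (g k)
    _ = n * A.trace.re := by
      simp only [hg, trace_sum, trace_vecMulVec, Complex.re_sum, dotProduct_comm _ (star _),
        star_dotProduct_self, Complex.ofReal_re, mul_sum]

lemma smul_gammaPlusCosts_subset {c : ℝ} (hc : 0 ≤ c) (A : Matrix (Fin n) (Fin n) ℂ) :
    c • gammaPlusCosts A ⊆ gammaPlusCosts (c • A) := by
  rintro _ ⟨_, ⟨m, g, hA, rfl⟩, rfl⟩
  refine ⟨m, fun k => √c • g k, ?_, ?_⟩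
  · simp [hA, smul_sum, star_smul, smul_vecMulVec, vecMulVec_smul, smul_smul,
      Real.mul_self_sqrt hc]
  · simp [l1n_smul, mul_pow, mul_sum, Real.sq_sqrt hc]

lemma gammaPlusCosts_add_subset (A B : Matrix (Fin n) (Fin n) ℂ) :
    gammaPlusCosts A + gammaPlusCosts B ⊆ gammaPlusCosts (A + B) := by
  rintro _ ⟨_, ⟨m, g, hA, rfl⟩, _, ⟨m', g', hB, rfl⟩, rfl⟩
  refine ⟨m + m', Fin.append g g', ?_, ?_⟩ <;> simp [Fin.sum_univ_add, hA, hB]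

lemma gammaPlus_smul_le {A : Matrix (Fin n) (Fin n) ℂ} (hA : A.PosSemidef) {c : ℝ}
    (hc : 0 ≤ c) : gammaPlus (c • A) ≤ c * gammaPlus A := by
  rw [gammaPlus_eq_sInf, gammaPlus_eq_sInf, ← smul_eq_mul, ← Real.sInf_smul_of_nonneg hc]
  exact csInf_le_csInf (bddBelow_gammaPlusCosts _) ((gammaPlusCosts_nonempty hA).smul_set)
    (smul_gammaPlusCosts_subset hc A)

lemma gammaPlus_add_le {A B : Matrix (Fin n) (Fin n) ℂ} (hA : A.PosSemidef)
    (hB : B.PosSemidef) : gammaPlus (A + B) ≤ gammaPlus A + gammaPlus B := by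
  rw [gammaPlus_eq_sInf, gammaPlus_eq_sInf, gammaPlus_eq_sInf,
    ← csInf_add (gammaPlusCosts_nonempty hA) (bddBelow_gammaPlusCosts A)
      (gammaPlusCosts_nonempty hB) (bddBelow_gammaPlusCosts B)]
  exact csInf_le_csInf (bddBelow_gammaPlusCosts _)
    ((gammaPlusCosts_nonempty hA).add (gammaPlusCosts_nonempty hB))
    (gammaPlusCosts_add_subset A B)

end Costs

namespace Matrix

variable {ι 𝕜 : Type*} [DecidableEq ι] [RCLike 𝕜]

open scoped MatrixOrder in
lemma IsHermitian.posSemidef_sub_smul_one [Fintype ι] {A : Matrix ι ι 𝕜} (hA : A.IsHermitian)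
    {r : ℝ} (hr : ∀ i, r ≤ hA.eigenvalues i) : (A - r • 1).PosSemidef := by
  rw [← le_iff, ← Algebra.algebraMap_eq_smul_one,
    algebraMap_le_iff_le_spectrum (a := A) hA.isSelfAdjoint,
    hA.spectrum_real_eq_range_eigenvalues]
  rintro _ ⟨i, rfl⟩
  exact hr i

lemma IsHermitian.posSemidef_sub_iInf_eigenvalues_smul_one [Fintype ι] {A : Matrix ι ι 𝕜}
    (hA : A.IsHermitian) : (A - (⨅ i, hA.eigenvalues i) • 1).PosSemidef :=
  hA.posSemidef_sub_smul_one fun i => ciInf_le (Set.finite_range _).bddBelow i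

lemma PosDef.iInf_eigenvalues_pos [Fintype ι] [Nonempty ι] {A : Matrix ι ι 𝕜}
    (hA : A.PosDef) : 0 < ⨅ i, hA.1.eigenvalues i := by
  obtain ⟨i, hi⟩ := exists_eq_ciInf_of_finite (f := hA.1.eigenvalues)
  exact hi ▸ hA.eigenvalues_pos i

lemma PosSemidef.smul_add_smul {T E : Matrix ι ι 𝕜} {μ ε c t : ℝ}
    (hT : (T - μ • 1).PosSemidef) (hE : (ε • 1 + E).PosSemidef) (hc : 0 ≤ c) (ht : 0 ≤ t)
    (h : t * ε ≤ c * μ) : (c • T + t • E).PosSemidef := by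
  have hsplit : c • T + t • E = c • (T - μ • 1) + t • (ε • 1 + E) + (c * μ - t * ε) • 1 := by
    module
  rw [hsplit]
  exact ((hT.smul hc).add (hE.smul ht)).add (PosSemidef.one.smul (sub_nonneg.2 h))

end Matrix

section Frobenius

variable {n : ℕ}

lemma frobNorm_nonneg (A : Matrix (Fin n) (Fin n) ℂ) : 0 ≤ frobNorm A := Real.sqrt_nonneg _

lemma frobNorm_sub_comm (A B : Matrix (Fin n) (Fin n) ℂ) :
    frobNorm (A - B) = frobNorm (B - A) := by
  simp only [frobNorm, Matrix.sub_apply, norm_sub_rev]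

lemma continuous_frobNorm : Continuous (frobNorm : Matrix (Fin n) (Fin n) ℂ → ℝ) := by
  unfold frobNorm
  fun_prop

lemma norm_star_dotProduct_mulVec_le (A : Matrix (Fin n) (Fin n) ℂ) (x : Fin n → ℂ) :
    ‖star x ⬝ᵥ (A *ᵥ x)‖ ≤ frobNorm A * ∑ i, ‖x i‖ ^ 2 := by
  calc ‖star x ⬝ᵥ (A *ᵥ x)‖ ≤ ∑ p : Fin n × Fin n, (‖x p.1‖ * ‖x p.2‖) * ‖A p.1 p.2‖ := by
        simp only [dotProduct, mulVec, mul_sum, ← univ_product_univ, sum_product]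
        refine (norm_sum_le _ _).trans (sum_le_sum fun i _ => (norm_sum_le _ _).trans ?_)
        refine sum_le_sum fun j _ => ?_
        simp only [Pi.star_apply, norm_mul, norm_star]
        linarith
    _ ≤ √(∑ p : Fin n × Fin n, (‖x p.1‖ * ‖x p.2‖) ^ 2) *
          √(∑ p : Fin n × Fin n, ‖A p.1 p.2‖ ^ 2) :=
        Real.sum_mul_le_sqrt_mul_sqrt _ _ _
    _ = frobNorm A * ∑ i, ‖x i‖ ^ 2 := by
        simp only [← univ_product_univ, sum_product, mul_pow, ← sum_mul_sum, frobNorm]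
        rw [Real.sqrt_mul_self (by positivity), mul_comm]

lemma Matrix.IsHermitian.posSemidef_frobNorm_smul_one_add {A : Matrix (Fin n) (Fin n) ℂ}
    (hA : A.IsHermitian) : (frobNorm A • 1 + A).PosSemidef := by
  refine PosSemidef.of_dotProduct_mulVec_nonneg
    ((isHermitian_one.smul (IsSelfAdjoint.all _)).add hA) fun x => ?_
  have him : (star x ⬝ᵥ (A *ᵥ x)).im = 0 := hA.im_star_dotProduct_mulVec_self x
  have hre : -(frobNorm A * ∑ i, ‖x i‖ ^ 2) ≤ (star x ⬝ᵥ (A *ᵥ x)).re :=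
    neg_le_of_abs_le ((Complex.abs_re_le_norm _).trans (norm_star_dotProduct_mulVec_le A x))
  rw [add_mulVec, dotProduct_add, smul_mulVec, one_mulVec, dotProduct_smul, star_dotProduct_self,
    Complex.real_smul, ← Complex.ofReal_mul, Complex.nonneg_iff]
  simp only [Complex.add_re, Complex.ofReal_re, Complex.add_im, Complex.ofReal_im, him]
  constructor <;> linarith

lemma re_trace_le_sqrt_mul_frobNorm (A : Matrix (Fin n) (Fin n) ℂ) :
    A.trace.re ≤ √n * frobNorm A := by
  calc A.trace.re ≤ ∑ i, ‖A i i‖ := by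
        simpa [trace, Complex.re_sum] using sum_le_sum fun i _ => Complex.re_le_norm (A i i)
    _ ≤ √(n * ∑ i, ‖A i i‖ ^ 2) :=
        Real.le_sqrt_of_sq_le
          (by simpa using sq_sum_le_card_mul_sum_sq (s := univ) (f := fun i => ‖A i i‖))
    _ ≤ √(n * ∑ i, ∑ j, ‖A i j‖ ^ 2) := by
        gcongr with i
        exact single_le_sum (f := fun j => ‖A i j‖ ^ 2) (fun _ _ => by positivity) (mem_univ i)
    _ = √n * frobNorm A := by rw [Real.sqrt_mul (Nat.cast_nonneg n), frobNorm]

end Frobenius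

section Perturbation

variable {n : ℕ}

lemma gammaPlus_smul_add_le {B Q : Matrix (Fin n) (Fin n) ℂ} (hB : B.PosSemidef)
    (hQ : Q.PosSemidef) {c : ℝ} (hc0 : 0 ≤ c) (hc1 : c ≤ 1) :
    gammaPlus ((1 - c) • B + Q) ≤ gammaPlus B + n * Q.trace.re :=
  calc gammaPlus ((1 - c) • B + Q) ≤ gammaPlus ((1 - c) • B) + gammaPlus Q :=
        gammaPlus_add_le (hB.smul (sub_nonneg.2 hc1)) hQ
    _ ≤ (1 - c) * gammaPlus B + n * Q.trace.re :=
        add_le_add (gammaPlus_smul_le hB (sub_nonneg.2 hc1)) (gammaPlus_le_mul_re_trace hQ)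
    _ ≤ gammaPlus B + n * Q.trace.re := by nlinarith [gammaPlus_nonneg B]

lemma gammaPlus_le_of_perturbation {B T E : Matrix (Fin n) (Fin n) ℂ} {μ c t : ℝ}
    (hB : B.PosSemidef) (hT : (T - μ • 1).PosSemidef) (hE : E.IsHermitian) (hc0 : 0 ≤ c)
    (hc1 : c ≤ 1) (ht0 : 0 ≤ t) (ht1 : t ≤ 1) (hEμ : frobNorm E ≤ c * μ) :
    gammaPlus ((1 - c) • B + (c • T + t • E)) ≤
      gammaPlus B + n * (c * T.trace.re + √n * frobNorm E) := by
  have hQ : (c • T + t • E).PosSemidef :=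
    hT.smul_add_smul hE.posSemidef_frobNorm_smul_one_add hc0 ht0
      (by nlinarith [frobNorm_nonneg E])
  have htrace : (c • T + t • E).trace.re ≤ c * T.trace.re + √n * frobNorm E := by
    have hE_trace := re_trace_le_sqrt_mul_frobNorm E
    have : 0 ≤ √n * frobNorm E := mul_nonneg (Real.sqrt_nonneg _) (frobNorm_nonneg E)
    simp only [trace_add, trace_smul, Complex.add_re, Complex.real_smul, Complex.re_ofReal_mul]
    nlinarith
  exact (gammaPlus_smul_add_le hB hQ hc0 hc1).trans (by gcongr)

lemma abs_gammaPlus_sub_le {T S : Matrix (Fin n) (Fin n) ℂ} {δ : ℝ} (hδ : 0 < δ)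
    (hT : (T - (2 * δ) • 1).PosSemidef) (hS : S.PosSemidef) (hTS : frobNorm (T - S) ≤ δ) :
    |gammaPlus T - gammaPlus S| ≤
      ((n : ℝ) / δ * T.trace.re + 2 * (n : ℝ) ^ ((3 : ℝ) / 2)) * frobNorm (T - S) := by
  set ε := frobNorm (T - S)
  set c := ε / δ
  have hε : 0 ≤ ε := frobNorm_nonneg _
  have hc0 : 0 ≤ c := by positivity
  have hc1 : c ≤ 1 := (div_le_one hδ).2 hTS
  have hεc : ε ≤ c * (2 * δ) := by
    have hcδ : c * δ = ε := div_mul_cancel₀ ε hδ.ne'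
    linarith
  have hT' : T.PosSemidef := by
    simpa using hT.add (PosSemidef.one.smul (by positivity : (0 : ℝ) ≤ 2 * δ))
  have hTS' : gammaPlus T ≤ gammaPlus S + n * (c * T.trace.re + √n * ε) := by
    have := gammaPlus_le_of_perturbation hS hT (hT'.1.sub hS.1) hc0 hc1 (sub_nonneg.2 hc1)
      (by linarith) hεc
    rwa [show (1 - c) • S + (c • T + (1 - c) • (T - S)) = T by module] at this
  have hST : gammaPlus S ≤ gammaPlus T + n * (c * T.trace.re + √n * ε) := by
    have := gammaPlus_le_of_perturbation hT' hT (hS.1.sub hT'.1) hc0 hc1 zero_le_one le_rfl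
      ((frobNorm_sub_comm S T).trans_le hεc)
    rwa [show (1 - c) • T + (c • T + (1 : ℝ) • (S - T)) = S by module, frobNorm_sub_comm] at this
  have hrpow : (n : ℝ) ^ ((3 : ℝ) / 2) = n * √n := by
    rw [Real.sqrt_eq_rpow, ← Real.rpow_one_add' (Nat.cast_nonneg n) (by norm_num)]
    norm_num
  have hbound : n * (c * T.trace.re + √n * ε) ≤
      ((n : ℝ) / δ * T.trace.re + 2 * (n : ℝ) ^ ((3 : ℝ) / 2)) * ε := by
    have : 0 ≤ n * √n * ε := by positivity
    rw [hrpow]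
    calc n * (c * T.trace.re + √n * ε) = n / δ * T.trace.re * ε + n * √n * ε := by ring
      _ ≤ (n / δ * T.trace.re + 2 * (n * √n)) * ε := by linarith
  rw [abs_sub_le_iff]
  constructor <;> linarith

lemma Matrix.PosDef.abs_gammaPlus_sub_le [Nonempty (Fin n)] {T S : Matrix (Fin n) (Fin n) ℂ}
    (hT : T.PosDef) (hS : S.PosSemidef) (hTS : frobNorm (T - S) ≤ (⨅ i, hT.1.eigenvalues i) / 2) :
    |gammaPlus T - gammaPlus S| ≤ ((n : ℝ) / ((⨅ i, hT.1.eigenvalues i) / 2) * T.trace.re +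
      2 * (n : ℝ) ^ ((3 : ℝ) / 2)) * frobNorm (T - S) := by
  have hT' := hT.1.posSemidef_sub_iInf_eigenvalues_smul_one
  rw [← mul_div_cancel₀ (⨅ i, hT.1.eigenvalues i) two_ne_zero] at hT'
  exact _root_.abs_gammaPlus_sub_le (half_pos hT.iInf_eigenvalues_pos) hT' hS hTS

lemma continuousOn_gammaPlus [Nonempty (Fin n)] :
    ContinuousOn gammaPlus {A : Matrix (Fin n) (Fin n) ℂ | A.PosDef} := by
  intro T hT
  have hdist : Continuous fun S => frobNorm (T - S) :=
    continuous_frobNorm.comp (continuous_const.sub continuous_id)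
  have hnear : ∀ᶠ S in 𝓝 T, frobNorm (T - S) ≤ (⨅ i, hT.1.eigenvalues i) / 2 :=
    (hdist.tendsto T).eventually
      (eventually_le_nhds (by simpa [frobNorm] using half_pos hT.iInf_eigenvalues_pos))
  rw [ContinuousWithinAt, tendsto_iff_dist_tendsto_zero]
  set C : ℝ := (n : ℝ) / ((⨅ i, hT.1.eigenvalues i) / 2) * T.trace.re +
    2 * (n : ℝ) ^ ((3 : ℝ) / 2)
  refine squeeze_zero' (g := fun S => C * frobNorm (T - S))
    (Eventually.of_forall fun _ => dist_nonneg) ?_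
    (by simpa [frobNorm] using ((hdist.tendsto T).const_mul C).mono_left nhdsWithin_le_nhds)
  filter_upwards [self_mem_nhdsWithin, nhdsWithin_le_nhds hnear] with S hS hSδ
  rw [Real.dist_eq, abs_sub_comm]
  exact hT.abs_gammaPlus_sub_le hS.posSemidef hSδ

end Perturbation

theorem stmt15 (n : ℕ) (hn : 1 ≤ n) :
    (∀ (T : Matrix (Fin n) (Fin n) ℂ) (hT : T.PosDef) (δ : ℝ),
      δ = (⨅ i, hT.1.eigenvalues i) / 2 →
      0 < δ ∧
      ∀ S : Matrix (Fin n) (Fin n) ℂ, S.PosDef → frobNorm (T - S) ≤ δ →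
        |gammaPlus T - gammaPlus S| ≤
          ((n : ℝ) / δ * T.trace.re + 2 * (n : ℝ) ^ ((3 : ℝ) / 2)) * frobNorm (T - S)) ∧
    ContinuousOn gammaPlus {A : Matrix (Fin n) (Fin n) ℂ | A.PosDef} := by
  have : Nonempty (Fin n) := ⟨⟨0, hn⟩⟩
  refine ⟨fun T hT δ hδ => ?_, continuousOn_gammaPlus⟩
  subst hδ
  exact ⟨half_pos hT.iInf_eigenvalues_pos, fun S hS => hT.abs_gammaPlus_sub_le hS.posSemidef⟩
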